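/- Let T be an interval exchange transformation that is ergodic with respect to Lebesgue measure λ, and let {a_i}_{i≥1} be a non-increasing sequence of positive reals. (i) If some y ∈ [0,1) satisfies λ(⋂_{n≥1} ⋃_{i≥n} T^{-i}(B(y, a_i))) > 0, then λ(⋂_{n≥1} ⋃_{i≥n} T^{-i}(B(y, a_i))) = 1. (ii) If the set of y with λ(⋂_{n≥1} ⋃_{i≥n} T^{-i}(B(y, a_i))) = 1 has positive λ-measure, then λ(⋂_{n≥1} ⋃_{i≥n} T^{-i}(B(y, a_i))) = 1 for λ-almost every y. -/
import Mathlib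


open MeasureTheory Filter

noncomputable section

/-- Lebesgue measure on `[0,1)`. -/
def lam : Measure ℝ := volume.restrict (Set.Ico 0 1)

/-- `⋂_{n} ⋃_{i ≥ n} A i`: the set of points lying in `A i` for infinitely many `i`. -/
def limsupSet {α : Type*} (A : ℕ → Set α) : Set α :=
  ⋂ n, ⋃ i, ⋃ _ : n ≤ i, A i

/-- A sequence of positive reals which is non-increasing with divergent sum. -/
def standardSeq (a : ℕ → ℝ) : Prop :=
  (∀ i, 0 < a i) ∧ (∀ m n, m ≤ n → a n ≤ a m) ∧ ¬ Summable a

/-- The left endpoint of the `j`-th interval determined by the length vector `L`. -/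
def pieceLeft {d : ℕ} (L : Fin d → ℝ) (j : Fin d) : ℝ :=
  ∑ k ∈ Finset.univ.filter (fun k => k < j), L k

/-- `x` belongs to the `j`-th interval `I_j = [∑_{k<j} l_k, ∑_{k≤j} l_k)`. -/
def inPiece {d : ℕ} (L : Fin d → ℝ) (j : Fin d) (x : ℝ) : Prop :=
  pieceLeft L j ≤ x ∧ x < pieceLeft L j + L j

open scoped Classical in
/-- The interval exchange transformation `S_{L,π}` (extended by the identity off `[0,1)`). -/
def iet {d : ℕ} (L : Fin d → ℝ) (π : Equiv.Perm (Fin d)) (x : ℝ) : ℝ :=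
  if h : ∃ j, inPiece L j x then
    x - pieceLeft L h.choose + ∑ k ∈ Finset.univ.filter (fun k => π k < π h.choose), L k
  else x

/-- Irreducibility of a permutation: no proper initial segment is invariant. -/
def IrredPerm {d : ℕ} (π : Equiv.Perm (Fin d)) : Prop :=
  ∀ k : Fin d, (k : ℕ) + 1 < d → Finset.image π (Finset.Iic k) ≠ Finset.Iic k

/-- The simplex of length vectors. -/
def simplexSet (d : ℕ) : Set (Fin d → ℝ) :=
  {L | (∀ i, 0 < L i) ∧ ∑ i, L i = 1}

/-- Normalization of a positive length vector to the simplex. -/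
def normLen {d : ℕ} (L : Fin d → ℝ) : Fin d → ℝ := fun i => L i / ∑ j, L j


/-- `T` is ergodic with respect to Lebesgue measure on `[0,1)`: every `T`-invariant
measurable subset of `[0,1)` has measure `0` or `1`. -/
def ergodicOn01 (T : ℝ → ℝ) : Prop :=
  ∀ A : Set ℝ, A ⊆ Set.Ico 0 1 → MeasurableSet A → T ⁻¹' A = A → lam A = 0 ∨ lam A = 1

section PieceBasics

variable {d : ℕ} {L : Fin d → ℝ}

lemma pieceLeft_nonneg (hL : ∀ i, 0 < L i) (j : Fin d) : 0 ≤ pieceLeft L j :=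
  Finset.sum_nonneg fun k _ => (hL k).le

lemma pieceLeft_add_eq (j : Fin d) :
    pieceLeft L j + L j = ∑ k ∈ Finset.univ.filter (fun k => k ≤ j), L k := by
  have h : Finset.univ.filter (fun k => k ≤ j)
      = insert j (Finset.univ.filter (fun k => k < j)) := by
    ext k
    simp only [Finset.mem_filter, Finset.mem_univ, true_and, Finset.mem_insert]
    constructor
    · intro hk; rcases eq_or_lt_of_le hk with h | h
      · exact Or.inl h
      · exact Or.inr h
    · rintro (rfl | hk); · exact le_refl _
      · exact hk.le
  rw [h, Finset.sum_insert (by simp), pieceLeft, add_comm]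

lemma pieceLeft_add_le (hL : ∀ i, 0 < L i) {j j' : Fin d} (h : j < j') :
    pieceLeft L j + L j ≤ pieceLeft L j' := by
  rw [pieceLeft_add_eq, pieceLeft]
  refine Finset.sum_le_sum_of_subset_of_nonneg ?_ fun k _ _ => (hL k).le
  intro k hk
  simp only [Finset.mem_filter, Finset.mem_univ, true_and] at hk ⊢
  exact lt_of_le_of_lt hk h

lemma piece_unique (hL : ∀ i, 0 < L i) {j j' : Fin d} {x : ℝ}
    (h : inPiece L j x) (h' : inPiece L j' x) : j = j' := by
  rcases lt_trichotomy j j' with hlt | he | hlt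
  · exact absurd (lt_of_lt_of_le h.2 (le_trans (pieceLeft_add_le hL hlt) h'.1)) (lt_irrefl x)
  · exact he
  · exact absurd (lt_of_lt_of_le h'.2 (le_trans (pieceLeft_add_le hL hlt) h.1)) (lt_irrefl x)

lemma pieceLeft_add_le_one (hL : ∀ i, 0 < L i) (hsum : ∑ i, L i = 1) (j : Fin d) :
    pieceLeft L j + L j ≤ 1 := by
  rw [pieceLeft_add_eq, ← hsum]
  exact Finset.sum_le_sum_of_subset_of_nonneg (Finset.filter_subset _ _)
    fun k _ _ => (hL k).le

lemma pieceLeft_succ {j : Fin d} (h : (j : ℕ) + 1 < d) :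
    pieceLeft L ⟨(j : ℕ) + 1, h⟩ = pieceLeft L j + L j := by
  rw [pieceLeft_add_eq, pieceLeft]
  congr 1
  ext k
  simp only [Finset.mem_filter, Finset.mem_univ, true_and, Fin.lt_def, Fin.le_def]
  omega

lemma pieceLeft_add_top {j : Fin d} (h : (j : ℕ) + 1 = d) (hsum : ∑ i, L i = 1) :
    pieceLeft L j + L j = 1 := by
  rw [pieceLeft_add_eq, ← hsum]
  congr 1
  apply Finset.filter_true_of_mem
  intro k _
  have := k.isLt
  rw [Fin.le_def]
  omega

lemma d_pos (hsum : ∑ i, L i = 1) : 0 < d := by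
  by_contra h
  push_neg at h
  interval_cases d
  simp at hsum

lemma pieceLeft_zero (hd : 0 < d) : pieceLeft L ⟨0, hd⟩ = 0 := by
  rw [pieceLeft]
  rw [Finset.filter_false_of_mem, Finset.sum_empty]
  intro k _
  simp [Fin.lt_def]

lemma exists_piece (hL : ∀ i, 0 < L i) (hsum : ∑ i, L i = 1) {x : ℝ}
    (hx : x ∈ Set.Ico (0 : ℝ) 1) : ∃ j, inPiece L j x := by
  have hd : 0 < d := d_pos hsum
  set s := Finset.univ.filter (fun j : Fin d => pieceLeft L j ≤ x) with hs
  have hne : s.Nonempty := ⟨⟨0, hd⟩, by simp [hs, pieceLeft_zero hd, hx.1]⟩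
  set j := s.max' hne with hj
  have hjs : j ∈ s := s.max'_mem hne
  have h1 : pieceLeft L j ≤ x := by simpa [hs] using hjs
  refine ⟨j, h1, ?_⟩
  by_contra h2
  push_neg at h2
  by_cases hcase : (j : ℕ) + 1 < d
  · have hmem : (⟨(j : ℕ) + 1, hcase⟩ : Fin d) ∈ s := by
      simp only [hs, Finset.mem_filter, Finset.mem_univ, true_and]
      rw [pieceLeft_succ hcase]
      exact h2
    have := s.le_max' _ hmem
    rw [← hj, Fin.le_def] at this
    simp at this
  · have hd' : (j : ℕ) + 1 = d := by have := j.isLt; omega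
    rw [pieceLeft_add_top hd' hsum] at h2
    exact absurd hx.2 (not_lt.mpr h2)

end PieceBasics

section IETBasics

variable {d : ℕ} {L : Fin d → ℝ} {π : Equiv.Perm (Fin d)}

/-- The rearranged length vector. -/
def permLen {d : ℕ} (L : Fin d → ℝ) (π : Equiv.Perm (Fin d)) : Fin d → ℝ :=
  fun i => L (π.symm i)

lemma permLen_pos (hL : ∀ i, 0 < L i) : ∀ i, 0 < permLen L π i := fun i => hL _

lemma permLen_sum (hsum : ∑ i, L i = 1) : ∑ i, permLen L π i = 1 := by
  calc ∑ i, permLen L π i = ∑ i, L (π.symm i) := rfl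
    _ = ∑ i, L i := Equiv.sum_comp π.symm L
    _ = 1 := hsum

lemma wsum_eq (L : Fin d → ℝ) (π : Equiv.Perm (Fin d)) (j : Fin d) :
    ∑ k ∈ Finset.univ.filter (fun k => π k < π j), L k
      = pieceLeft (permLen L π) (π j) := by
  rw [pieceLeft]
  refine Finset.sum_equiv π ?_ ?_
  · intro k; simp
  · intro k _; simp [permLen]

lemma iet_eq (hL : ∀ i, 0 < L i) {j : Fin d} {x : ℝ} (hj : inPiece L j x) :
    iet L π x = x - pieceLeft L j + pieceLeft (permLen L π) (π j) := by
  have hex : ∃ j, inPiece L j x := ⟨j, hj⟩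
  simp only [iet, dif_pos hex]
  rw [piece_unique hL hex.choose_spec hj, wsum_eq]

lemma iet_id {x : ℝ} (h : ∀ j, ¬ inPiece L j x) : iet L π x = x := by
  simp only [iet, dif_neg (not_exists.mpr h)]

lemma inPiece_mem_Ico (hL : ∀ i, 0 < L i) (hsum : ∑ i, L i = 1) {j : Fin d} {x : ℝ}
    (h : inPiece L j x) : x ∈ Set.Ico (0 : ℝ) 1 :=
  ⟨le_trans (pieceLeft_nonneg hL j) h.1,
    lt_of_lt_of_le h.2 (pieceLeft_add_le_one hL hsum j)⟩

lemma iet_inPiece (hL : ∀ i, 0 < L i) {j : Fin d} {x : ℝ} (h : inPiece L j x) :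
    inPiece (permLen L π) (π j) (iet L π x) := by
  rw [iet_eq hL h]
  have hLL : permLen L π (π j) = L j := by simp [permLen]
  constructor
  · have := h.1; linarith
  · have := h.2; rw [hLL]; linarith

lemma iet_mem_Ico (hL : ∀ i, 0 < L i) (hsum : ∑ i, L i = 1) {x : ℝ}
    (hx : x ∈ Set.Ico (0 : ℝ) 1) : iet L π x ∈ Set.Ico (0 : ℝ) 1 := by
  obtain ⟨j, hj⟩ := exists_piece hL hsum hx
  exact inPiece_mem_Ico (permLen_pos hL) (permLen_sum hsum) (iet_inPiece hL hj)

lemma iet_preimage_Ico (hL : ∀ i, 0 < L i) (hsum : ∑ i, L i = 1) :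
    iet L π ⁻¹' (Set.Ico (0 : ℝ) 1) = Set.Ico (0 : ℝ) 1 := by
  ext x
  simp only [Set.mem_preimage]
  constructor
  · intro hx
    by_contra h
    have h2 : ∀ j, ¬ inPiece L j x := fun j hj => h (inPiece_mem_Ico hL hsum hj)
    rw [iet_id h2] at hx
    exact h hx
  · exact iet_mem_Ico hL hsum

/-- The `j`-th piece as a set. -/
lemma inPiece_iff_mem_Ico {j : Fin d} {x : ℝ} :
    inPiece L j x ↔ x ∈ Set.Ico (pieceLeft L j) (pieceLeft L j + L j) := Iff.rfl

lemma iet_eq' (hL : ∀ i, 0 < L i) {j : Fin d} {x : ℝ} (hj : inPiece L j x) :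
    iet L π x = x + (pieceLeft (permLen L π) (π j) - pieceLeft L j) := by
  rw [iet_eq hL hj]; ring

lemma iet_preimage (hL : ∀ i, 0 < L i) (S : Set ℝ) :
    iet L π ⁻¹' S =
      (⋃ j, Set.Ico (pieceLeft L j) (pieceLeft L j + L j) ∩
        (fun x => x + (pieceLeft (permLen L π) (π j) - pieceLeft L j)) ⁻¹' S)
      ∪ ((⋃ j, Set.Ico (pieceLeft L j) (pieceLeft L j + L j))ᶜ ∩ S) := by
  ext x
  simp only [Set.mem_preimage, Set.mem_union, Set.mem_inter_iff, Set.mem_iUnion,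
    Set.mem_compl_iff, not_exists]
  by_cases h : ∃ j, inPiece L j x
  · obtain ⟨j, hj⟩ := h
    rw [iet_eq' hL hj]
    constructor
    · intro hS
      exact Or.inl ⟨j, inPiece_iff_mem_Ico.mp hj, hS⟩
    · rintro (⟨j', hj', hS⟩ | ⟨hno, _⟩)
      · rwa [piece_unique hL (inPiece_iff_mem_Ico.mpr hj') hj] at hS
      · exact absurd (inPiece_iff_mem_Ico.mp hj) (hno j)
  · push_neg at h
    rw [iet_id h]
    constructor
    · intro hS
      exact Or.inr ⟨fun j => h j, hS⟩
    · rintro (⟨j', hj', hS⟩ | ⟨_, hS⟩)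
      · exact absurd (inPiece_iff_mem_Ico.mpr hj') (h j')
      · exact hS

lemma iet_measurable (hL : ∀ i, 0 < L i) : Measurable (iet L π) := by
  intro S hS
  rw [iet_preimage hL]
  refine MeasurableSet.union ?_ ?_
  · exact .iUnion fun j => measurableSet_Ico.inter (measurable_add_const _ hS)
  · exact ((MeasurableSet.iUnion fun j => measurableSet_Ico).compl).inter hS

end IETBasics

section MP

variable {d : ℕ} {L : Fin d → ℝ} {π : Equiv.Perm (Fin d)}

lemma piece_sets_disjoint (hL : ∀ i, 0 < L i) :
    Pairwise (Function.onFun Disjoint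
      (fun j : Fin d => Set.Ico (pieceLeft L j) (pieceLeft L j + L j))) := by
  intro j j' hjj'
  rw [Function.onFun, Set.disjoint_left]
  intro x hx hx'
  exact hjj' (piece_unique hL (inPiece_iff_mem_Ico.mpr hx) (inPiece_iff_mem_Ico.mpr hx'))

lemma union_pieces (hL : ∀ i, 0 < L i) (hsum : ∑ i, L i = 1) :
    ⋃ j : Fin d, Set.Ico (pieceLeft L j) (pieceLeft L j + L j) = Set.Ico (0 : ℝ) 1 := by
  ext x
  simp only [Set.mem_iUnion]
  constructor
  · rintro ⟨j, hj⟩; exact inPiece_mem_Ico hL hsum (inPiece_iff_mem_Ico.mpr hj)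
  · intro hx
    obtain ⟨j, hj⟩ := exists_piece hL hsum hx
    exact ⟨j, inPiece_iff_mem_Ico.mp hj⟩

lemma iet_volume_eq (hL : ∀ i, 0 < L i) (hsum : ∑ i, L i = 1) {S : Set ℝ}
    (hS : MeasurableSet S) :
    volume (iet L π ⁻¹' S ∩ Set.Ico 0 1) = volume (S ∩ Set.Ico 0 1) := by
  set L' : Fin d → ℝ := permLen L π with hL'def
  have hL' : ∀ i, 0 < L' i := permLen_pos hL
  have hsum' : ∑ i, L' i = 1 := permLen_sum hsum
  set c : Fin d → ℝ := fun j => pieceLeft L' (π j) - pieceLeft L j with hc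
  have h1 : iet L π ⁻¹' S ∩ Set.Ico 0 1
      = ⋃ j, Set.Ico (pieceLeft L j) (pieceLeft L j + L j) ∩ (fun x => x + c j) ⁻¹' S := by
    ext x
    simp only [Set.mem_inter_iff, Set.mem_preimage, Set.mem_iUnion]
    constructor
    · rintro ⟨hxS, hxI⟩
      obtain ⟨j, hj⟩ := exists_piece hL hsum hxI
      refine ⟨j, inPiece_iff_mem_Ico.mp hj, ?_⟩
      rw [← iet_eq' hL hj]
      exact hxS
    · rintro ⟨j, hj, hS'⟩
      have hj' := inPiece_iff_mem_Ico.mpr hj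
      refine ⟨?_, inPiece_mem_Ico hL hsum hj'⟩
      rw [iet_eq' hL hj']
      exact hS'
  have h2 : ∀ j, Set.Ico (pieceLeft L j) (pieceLeft L j + L j) ∩ (fun x => x + c j) ⁻¹' S
      = (fun x => x + c j) ⁻¹'
        (Set.Ico (pieceLeft L' (π j)) (pieceLeft L' (π j) + L' (π j)) ∩ S) := by
    intro j
    have hLL : L' (π j) = L j := by simp [hL'def, permLen]
    ext x
    simp only [Set.mem_inter_iff, Set.mem_preimage, Set.mem_Ico, hLL, hc]
    constructor
    · rintro ⟨⟨ha, hb⟩, hs⟩; exact ⟨⟨by linarith, by linarith⟩, hs⟩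
    · rintro ⟨⟨ha, hb⟩, hs⟩; exact ⟨⟨by linarith, by linarith⟩, hs⟩
  have hdisj : Pairwise (Function.onFun Disjoint
      (fun j : Fin d => Set.Ico (pieceLeft L j) (pieceLeft L j + L j) ∩ (fun x => x + c j) ⁻¹' S)) :=
    fun j j' h => ((piece_sets_disjoint hL) h).mono Set.inter_subset_left Set.inter_subset_left
  have hmeas : ∀ j : Fin d, MeasurableSet
      (Set.Ico (pieceLeft L j) (pieceLeft L j + L j) ∩ (fun x => x + c j) ⁻¹' S) :=
    fun j => measurableSet_Ico.inter (measurable_add_const _ hS)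
  have hdisj' : Pairwise (Function.onFun Disjoint
      (fun j : Fin d => Set.Ico (pieceLeft L' j) (pieceLeft L' j + L' j) ∩ S)) :=
    fun j j' h => ((piece_sets_disjoint hL') h).mono Set.inter_subset_left Set.inter_subset_left
  have hmeas' : ∀ j : Fin d, MeasurableSet
      (Set.Ico (pieceLeft L' j) (pieceLeft L' j + L' j) ∩ S) :=
    fun j => measurableSet_Ico.inter hS
  calc volume (iet L π ⁻¹' S ∩ Set.Ico 0 1)
      = ∑ j : Fin d, volume
          (Set.Ico (pieceLeft L j) (pieceLeft L j + L j) ∩ (fun x => x + c j) ⁻¹' S) := by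
        rw [h1, measure_iUnion hdisj hmeas, tsum_fintype]
    _ = ∑ j : Fin d, volume
          (Set.Ico (pieceLeft L' (π j)) (pieceLeft L' (π j) + L' (π j)) ∩ S) := by
        refine Finset.sum_congr rfl fun j _ => ?_
        rw [h2 j]
        exact measure_preimage_add_right volume (c j) _
    _ = ∑ j : Fin d, volume (Set.Ico (pieceLeft L' j) (pieceLeft L' j + L' j) ∩ S) :=
        Equiv.sum_comp π (fun j => volume (Set.Ico (pieceLeft L' j) (pieceLeft L' j + L' j) ∩ S))
    _ = volume (⋃ j, Set.Ico (pieceLeft L' j) (pieceLeft L' j + L' j) ∩ S) := by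
        rw [measure_iUnion hdisj' hmeas', tsum_fintype]
    _ = volume (S ∩ Set.Ico 0 1) := by
        rw [← Set.iUnion_inter, union_pieces hL' hsum', Set.inter_comm]

lemma iet_measurePreserving (hL : ∀ i, 0 < L i) (hsum : ∑ i, L i = 1) :
    MeasurePreserving (iet L π) lam lam := by
  refine ⟨iet_measurable hL, ?_⟩
  refine Measure.ext fun S hS => ?_
  rw [Measure.map_apply (iet_measurable hL) hS]
  rw [lam, Measure.restrict_apply (iet_measurable hL hS), Measure.restrict_apply hS]
  exact iet_volume_eq hL hsum hS

end MP

section ZeroOne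

lemma lam_univ : lam Set.univ = 1 := by
  rw [lam, Measure.restrict_apply MeasurableSet.univ, Set.univ_inter, Real.volume_Ico]
  norm_num

lemma lam_le_one (S : Set ℝ) : lam S ≤ 1 := by
  rw [← lam_univ]; exact measure_mono (Set.subset_univ _)

instance : IsFiniteMeasure lam := ⟨by rw [lam_univ]; exact ENNReal.one_lt_top⟩

lemma mem_limsupSet {α : Type*} {A : ℕ → Set α} {x : α} :
    x ∈ limsupSet A ↔ ∀ n, ∃ i, n ≤ i ∧ x ∈ A i := by
  simp [limsupSet]

lemma limsupSet_mono {α : Type*} {A B : ℕ → Set α} (h : ∀ i, A i ⊆ B i) :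
    limsupSet A ⊆ limsupSet B := by
  intro x hx
  rw [mem_limsupSet] at hx ⊢
  intro n
  obtain ⟨i, hi, hxi⟩ := hx n
  exact ⟨i, hi, h i hxi⟩

/-- The zero-one trick: a measurable set `E` with `E ⊆ T⁻¹E` has measure 0 or 1. -/
lemma zero_one_trick {T : ℝ → ℝ} (hmp : MeasurePreserving T lam lam)
    (hIco : T ⁻¹' (Set.Ico 0 1) = Set.Ico 0 1) (hErg : ergodicOn01 T)
    {E : Set ℝ} (hE : MeasurableSet E) (hsub : E ⊆ T ⁻¹' E) :
    lam E = 0 ∨ lam E = 1 := by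
  set F := ⋃ n, T^[n] ⁻¹' E with hF
  have hmono : Monotone fun n => T^[n] ⁻¹' E := by
    refine monotone_nat_of_le_succ fun n => ?_
    calc T^[n] ⁻¹' E ⊆ T^[n] ⁻¹' (T ⁻¹' E) := Set.preimage_mono hsub
      _ = T^[n + 1] ⁻¹' E := by rw [← Set.preimage_comp, ← Function.iterate_succ']
  have hTF : T ⁻¹' F = F := by
    apply Set.Subset.antisymm
    · rw [hF, Set.preimage_iUnion]
      refine Set.iUnion_subset fun n => ?_
      have h : T ⁻¹' (T^[n] ⁻¹' E) = T^[n + 1] ⁻¹' E := by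
        rw [← Set.preimage_comp, ← Function.iterate_succ]
      rw [h]
      exact Set.subset_iUnion (fun n => T^[n] ⁻¹' E) (n + 1)
    · rw [hF, Set.preimage_iUnion]
      refine Set.iUnion_subset fun n => ?_
      have h : T ⁻¹' (T^[n] ⁻¹' E) = T^[n + 1] ⁻¹' E := by
        rw [← Set.preimage_comp, ← Function.iterate_succ]
      refine Set.Subset.trans (hmono (Nat.le_succ n)) ?_
      have : T^[n + 1] ⁻¹' E ⊆ T ⁻¹' (T^[n] ⁻¹' E) := by rw [h]
      exact Set.Subset.trans this (Set.subset_iUnion (fun i => T ⁻¹' (T^[i] ⁻¹' E)) n)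
  have hFmeas : MeasurableSet F := .iUnion fun n => (hmp.measurable.iterate n) hE
  have hFE : lam F = lam E := by
    rw [hF, Directed.measure_iUnion (hmono.directed_le)]
    have h : ∀ n, lam (T^[n] ⁻¹' E) = lam E := fun n =>
      (hmp.iterate n).measure_preimage hE.nullMeasurableSet
    simp only [h, iSup_const]
  have hA := hErg (F ∩ Set.Ico 0 1) Set.inter_subset_right
    (hFmeas.inter measurableSet_Ico)
    (by rw [Set.preimage_inter, hTF, hIco])
  have hAF : lam (F ∩ Set.Ico 0 1) = lam F := by
    rw [lam, Measure.restrict_apply (hFmeas.inter measurableSet_Ico),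
      Measure.restrict_apply hFmeas, Set.inter_assoc, Set.inter_self]
  rw [hAF, hFE] at hA
  exact hA

end ZeroOne

section LimsupLemmas

variable {T : ℝ → ℝ}

lemma limsup_shift_subset {a : ℕ → ℝ} (hmono : ∀ m n, m ≤ n → a n ≤ a m) (y : ℝ) :
    limsupSet (fun i => T^[i] ⁻¹' Metric.ball y (a i))
      ⊆ T ⁻¹' limsupSet (fun i => T^[i] ⁻¹' Metric.ball y (a i)) := by
  intro x hx
  rw [Set.mem_preimage, mem_limsupSet]
  rw [mem_limsupSet] at hx
  intro n
  obtain ⟨i, hi, hxi⟩ := hx (n + 1)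
  refine ⟨i - 1, by omega, ?_⟩
  rw [Set.mem_preimage] at hxi ⊢
  have h1 : T^[i - 1] (T x) = T^[i] x := by
    rw [← Function.iterate_succ_apply]
    congr 1
    omega
  rw [h1]
  exact Metric.ball_subset_ball (hmono (i - 1) i (by omega)) hxi

lemma limsupSet_measurable (hT : Measurable T) {a : ℕ → ℝ} (y : ℝ) :
    MeasurableSet (limsupSet fun i => T^[i] ⁻¹' Metric.ball y (a i)) :=
  .iInter fun _ => .iUnion fun i => .iUnion fun _ => (hT.iterate i) measurableSet_ball

/-- Part (i): the zero-one law for each center. -/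
lemma part_one (hmp : MeasurePreserving T lam lam)
    (hIco : T ⁻¹' (Set.Ico 0 1) = Set.Ico 0 1) (hErg : ergodicOn01 T)
    {a : ℕ → ℝ} (hmono : ∀ m n, m ≤ n → a n ≤ a m) (y : ℝ) :
    lam (limsupSet fun i => T^[i] ⁻¹' Metric.ball y (a i)) = 0 ∨
      lam (limsupSet fun i => T^[i] ⁻¹' Metric.ball y (a i)) = 1 :=
  zero_one_trick hmp hIco hErg (limsupSet_measurable hmp.measurable y)
    (limsup_shift_subset hmono y)

/-- If the radii are bounded below, every center in `[0,1)` has a full limsup set. -/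
lemma const_radius_full (hmp : MeasurePreserving T lam lam)
    (hIco : T ⁻¹' (Set.Ico 0 1) = Set.Ico 0 1) (hErg : ergodicOn01 T)
    {a : ℕ → ℝ} {c : ℝ} (hc : 0 < c) (hca : ∀ i, c ≤ a i)
    {y : ℝ} (hy : y ∈ Set.Ico (0 : ℝ) 1) :
    lam (limsupSet fun i => T^[i] ⁻¹' Metric.ball y (a i)) = 1 := by
  set V := limsupSet (fun i => T^[i] ⁻¹' Metric.ball y c) with hV
  have hVmeas : MeasurableSet V := limsupSet_measurable hmp.measurable y
  have hVsub : V ⊆ T ⁻¹' V :=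
    limsup_shift_subset (a := fun _ => c) (fun _ _ _ => le_refl c) y
  -- positive measure via Poincaré recurrence
  set s := Metric.ball y c ∩ Set.Ico (0 : ℝ) 1 with hs
  have hsmeas : MeasurableSet s := measurableSet_ball.inter measurableSet_Ico
  have hcons : MeasureTheory.Conservative T lam := hmp.conservative
  have hrec := hcons.ae_mem_imp_frequently_image_mem hsmeas.nullMeasurableSet
  have hsV : lam (s \ V) = 0 := by
    refine measure_mono_null ?_ (ae_iff.mp hrec)
    intro x hx
    simp only [Set.mem_setOf_eq, Classical.not_imp]
    refine ⟨hx.1, fun hfreq => hx.2 ?_⟩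
    rw [hV, mem_limsupSet]
    intro n
    obtain ⟨i, hi, hxi⟩ := (frequently_atTop.mp hfreq) n
    exact ⟨i, hi, Set.mem_preimage.mpr hxi.1⟩
  have hspos : 0 < lam s := by
    have hsub2 : Set.Ico y (min (y + c) 1) ⊆ s := by
      intro z hz
      rcases hz with ⟨hz1, hz2⟩
      have hz3 := lt_min_iff.mp hz2
      constructor
      · rw [Metric.mem_ball, Real.dist_eq, abs_lt]
        constructor
        · linarith
        · linarith [hz3.1]
      · exact ⟨le_trans hy.1 hz1, hz3.2⟩
    have hIcoSub : Set.Ico y (min (y + c) 1) ⊆ Set.Ico (0 : ℝ) 1 := fun z hz =>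
      ⟨le_trans hy.1 hz.1, lt_of_lt_of_le hz.2 (min_le_right _ _)⟩
    have h0 : lam (Set.Ico y (min (y + c) 1)) = volume (Set.Ico y (min (y + c) 1)) := by
      rw [lam, Measure.restrict_apply measurableSet_Ico, Set.inter_eq_left.mpr hIcoSub]
    have h1 : (0 : ENNReal) < volume (Set.Ico y (min (y + c) 1)) := by
      rw [Real.volume_Ico]
      apply ENNReal.ofReal_pos.mpr
      have hlt : y < min (y + c) 1 := lt_min (by linarith [hy.1]) hy.2
      linarith
    calc (0 : ENNReal) < volume (Set.Ico y (min (y + c) 1)) := h1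
      _ = lam (Set.Ico y (min (y + c) 1)) := h0.symm
      _ ≤ lam s := measure_mono hsub2
  have hVpos : 0 < lam V := by
    have hsplit : s ⊆ (s \ V) ∪ V := by
      intro z hz
      by_cases h : z ∈ V
      · exact Or.inr h
      · exact Or.inl ⟨hz, h⟩
    have h1 : lam s ≤ lam V := by
      calc lam s ≤ lam ((s \ V) ∪ V) := measure_mono hsplit
        _ ≤ lam (s \ V) + lam V := measure_union_le _ _
        _ = lam V := by rw [hsV, zero_add]
    exact lt_of_lt_of_le hspos h1
  have hV1 : lam V = 1 := by
    rcases zero_one_trick hmp hIco hErg hVmeas hVsub with h | h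
    · rw [h] at hVpos; exact absurd hVpos (lt_irrefl 0)
    · exact h
  have hsub3 : V ⊆ limsupSet fun i => T^[i] ⁻¹' Metric.ball y (a i) :=
    limsupSet_mono fun i => Set.preimage_mono (Metric.ball_subset_ball (hca i))
  refine le_antisymm (lam_le_one _) ?_
  rw [← hV1]
  exact measure_mono hsub3

end LimsupLemmas

section KeyStep

variable {d : ℕ} {L : Fin d → ℝ} {π : Equiv.Perm (Fin d)}

lemma key_step (hL : ∀ i, 0 < L i) (hsum : ∑ i, L i = 1)
    {a : ℕ → ℝ} (hmono : ∀ m n, m ≤ n → a n ≤ a m)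
    (hsmall : ∀ ε, 0 < ε → ∃ i, a i < ε)
    {y : ℝ} (hy : y ∈ Set.Ico (0 : ℝ) 1) (hyS : ∀ j, y ≠ pieceLeft L j) :
    limsupSet (fun i => (iet L π)^[i] ⁻¹' Metric.ball y (a i))
      ⊆ iet L π ⁻¹' limsupSet (fun i => (iet L π)^[i] ⁻¹' Metric.ball (iet L π y) (a i)) := by
  have hd : 0 < d := d_pos hsum
  haveI : Nonempty (Fin d) := ⟨⟨0, hd⟩⟩
  set ρ : ℝ := min (1 - y)
    (Finset.univ.inf' Finset.univ_nonempty fun j => |y - pieceLeft L j|) with hρ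
  have hρpos : 0 < ρ := by
    apply lt_min
    · linarith [hy.2]
    · rw [Finset.lt_inf'_iff]
      intro j _
      rw [abs_pos, sub_ne_zero]
      exact hyS j
  obtain ⟨i₀, hi₀⟩ := hsmall ρ hρpos
  obtain ⟨j, hj⟩ := exists_piece hL hsum hy
  have hinf : ∀ j', ρ ≤ |y - pieceLeft L j'| := fun j' =>
    le_trans (min_le_right _ _) (Finset.inf'_le _ (Finset.mem_univ j'))
  have main : ∀ i x, i₀ ≤ i → (iet L π)^[i] x ∈ Metric.ball y (a i) →
      (iet L π)^[i] (iet L π x) ∈ Metric.ball (iet L π y) (a i) := by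
    intro i x hi hx
    set z := (iet L π)^[i] x with hz
    have hai : a i < ρ := lt_of_le_of_lt (hmono i₀ i hi) hi₀
    rw [Metric.mem_ball, Real.dist_eq] at hx
    have hzy : |z - y| < ρ := lt_trans hx hai
    have hzj : inPiece L j z := by
      constructor
      · by_contra h
        push_neg at h
        have h2 : y - pieceLeft L j ≤ |z - y| := by
          rw [abs_sub_comm, abs_of_nonneg (by linarith [hj.1] : (0 : ℝ) ≤ y - z)]
          linarith
        have h3 := hinf j
        rw [abs_of_nonneg (by linarith [hj.1] : (0 : ℝ) ≤ y - pieceLeft L j)] at h3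
        linarith
      · by_contra h
        push_neg at h
        have hyz : y < z := lt_of_lt_of_le hj.2 h
        have habs : |z - y| = z - y := abs_of_nonneg (by linarith)
        by_cases hcase : (j : ℕ) + 1 < d
        · have hsj' : pieceLeft L ⟨(j : ℕ) + 1, hcase⟩ = pieceLeft L j + L j :=
            pieceLeft_succ hcase
          have h2 := hinf ⟨(j : ℕ) + 1, hcase⟩
          rw [hsj', abs_of_nonpos (by linarith [hj.2] : y - (pieceLeft L j + L j) ≤ 0)] at h2
          linarith
        · have hd' : (j : ℕ) + 1 = d := by have := j.isLt; omega
          have h1 : pieceLeft L j + L j = 1 := pieceLeft_add_top hd' hsum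
          have hρ1 : ρ ≤ 1 - y := min_le_left _ _
          linarith
    have hdist : dist (iet L π z) (iet L π y) = dist z y := by
      rw [iet_eq' hL hzj, iet_eq' hL hj, Real.dist_eq, Real.dist_eq]
      congr 1
      ring
    have hfin : (iet L π)^[i] (iet L π x) = iet L π z := by
      rw [← Function.iterate_succ_apply, Function.iterate_succ_apply']
    rw [hfin, Metric.mem_ball, hdist, Real.dist_eq]
    exact hx
  intro x hx
  rw [Set.mem_preimage, mem_limsupSet]
  rw [mem_limsupSet] at hx
  intro n
  obtain ⟨i, hi, hxi⟩ := hx (max n i₀)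
  exact ⟨i, le_trans (le_max_left _ _) hi,
    main i x (le_trans (le_max_right _ _) hi) hxi⟩

end KeyStep

section Final

variable {d : ℕ} {L : Fin d → ℝ} {π : Equiv.Perm (Fin d)}

lemma G_measurable {T : ℝ → ℝ} (hT : Measurable T) (a : ℕ → ℝ) :
    MeasurableSet {y : ℝ | lam (limsupSet fun i => T^[i] ⁻¹' Metric.ball y (a i)) = 1} := by
  set W : Set (ℝ × ℝ) :=
    ⋂ n, ⋃ i, ⋃ _ : n ≤ i, {p : ℝ × ℝ | dist (T^[i] p.2) p.1 < a i} with hW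
  have hWmeas : MeasurableSet W := by
    refine .iInter fun n => .iUnion fun i => .iUnion fun _ => ?_
    have hm : Measurable fun p : ℝ × ℝ => dist (T^[i] p.2) p.1 :=
      Measurable.dist ((hT.iterate i).comp measurable_snd) measurable_fst
    exact measurableSet_lt hm measurable_const
  have hfun : Measurable fun y => lam (Prod.mk y ⁻¹' W) :=
    measurable_measure_prodMk_left hWmeas
  have hslice : ∀ y, Prod.mk y ⁻¹' W
      = limsupSet fun i => T^[i] ⁻¹' Metric.ball y (a i) := by
    intro y
    ext x
    simp only [hW, Set.mem_preimage, Set.mem_iInter, Set.mem_iUnion, Set.mem_setOf_eq,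
      limsupSet, Metric.mem_ball]
  have hset : {y : ℝ | lam (limsupSet fun i => T^[i] ⁻¹' Metric.ball y (a i)) = 1}
      = (fun y => lam (Prod.mk y ⁻¹' W)) ⁻¹' {1} := by
    ext y
    simp [hslice y]
  rw [hset]
  exact hfun (measurableSet_singleton 1)

lemma N_null {T : ℝ → ℝ} (hmp : MeasurePreserving T lam lam) :
    lam (⋃ k : ℕ, ⋃ j : Fin d, T^[k] ⁻¹' {pieceLeft L j}) = 0 := by
  refine measure_iUnion_null fun k => measure_iUnion_null fun j => ?_
  rw [(hmp.iterate k).measure_preimage (measurableSet_singleton _).nullMeasurableSet]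
  rw [lam, Measure.restrict_apply (measurableSet_singleton _)]
  exact measure_mono_null Set.inter_subset_left Real.volume_singleton

lemma part_two_small (hL : ∀ i, 0 < L i) (hsum : ∑ i, L i = 1)
    (hErg : ergodicOn01 (iet L π))
    {a : ℕ → ℝ} (hmono : ∀ m n, m ≤ n → a n ≤ a m)
    (hsmall : ∀ ε : ℝ, 0 < ε → ∃ i, a i < ε)
    (hposG : 0 < lam {y | lam (limsupSet fun i =>
      (iet L π)^[i] ⁻¹' Metric.ball y (a i)) = 1}) :
    ∀ᵐ y ∂lam, lam (limsupSet fun i => (iet L π)^[i] ⁻¹' Metric.ball y (a i)) = 1 := by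
  set T := iet L π with hT
  have hmp : MeasurePreserving T lam lam := iet_measurePreserving hL hsum
  have hIco : T ⁻¹' (Set.Ico 0 1) = Set.Ico 0 1 := iet_preimage_Ico hL hsum
  set G := {y | lam (limsupSet fun i => T^[i] ⁻¹' Metric.ball y (a i)) = 1} with hG
  have hGmeas : MeasurableSet G := G_measurable hmp.measurable a
  set N := ⋃ k : ℕ, ⋃ j : Fin d, T^[k] ⁻¹' {pieceLeft L j} with hN
  have hNmeas : MeasurableSet N :=
    .iUnion fun k => .iUnion fun j => (hmp.measurable.iterate k) (measurableSet_singleton _)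
  have hNnull : lam N = 0 := N_null hmp
  set G₀ := (G ∩ Set.Ico 0 1) \ N with hG₀
  have hsub : G₀ ⊆ T ⁻¹' G₀ := by
    rintro y ⟨⟨hyG, hyI⟩, hyN⟩
    have hyS : ∀ j, y ≠ pieceLeft L j := by
      intro j hyj
      exact hyN (Set.mem_iUnion.mpr ⟨0, Set.mem_iUnion.mpr ⟨j, by simp [hyj]⟩⟩)
    have hkey := key_step (π := π) hL hsum hmono hsmall hyI hyS
    have hfull : lam (limsupSet fun i => T^[i] ⁻¹' Metric.ball (T y) (a i)) = 1 := by
      refine le_antisymm (lam_le_one _) ?_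
      calc (1 : ENNReal) = lam (limsupSet fun i => T^[i] ⁻¹' Metric.ball y (a i)) := hyG.symm
        _ ≤ lam (T ⁻¹' limsupSet fun i => T^[i] ⁻¹' Metric.ball (T y) (a i)) :=
            measure_mono hkey
        _ = lam (limsupSet fun i => T^[i] ⁻¹' Metric.ball (T y) (a i)) :=
            hmp.measure_preimage (limsupSet_measurable hmp.measurable _).nullMeasurableSet
    have hTyI : T y ∈ Set.Ico (0 : ℝ) 1 := by
      have h : y ∈ T ⁻¹' Set.Ico 0 1 := by rw [hIco]; exact hyI
      exact h
    have hTyN : T y ∉ N := by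
      intro hTyN
      apply hyN
      rw [hN, Set.mem_iUnion] at hTyN ⊢
      obtain ⟨k, hk⟩ := hTyN
      rw [Set.mem_iUnion] at hk
      obtain ⟨j, hkj⟩ := hk
      refine ⟨k + 1, Set.mem_iUnion.mpr ⟨j, ?_⟩⟩
      rw [Set.mem_preimage] at hkj ⊢
      rwa [Function.iterate_succ_apply]
    exact Set.mem_preimage.mpr ⟨⟨hfull, hTyI⟩, hTyN⟩
  have hG₀meas : MeasurableSet G₀ := (hGmeas.inter measurableSet_Ico).diff hNmeas
  have hG₀G : lam G₀ = lam G := by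
    rw [hG₀, measure_diff_null' (measure_mono_null Set.inter_subset_right hNnull)]
    rw [lam, Measure.restrict_apply (hGmeas.inter measurableSet_Ico),
      Measure.restrict_apply hGmeas, Set.inter_assoc, Set.inter_self]
  rcases zero_one_trick hmp hIco hErg hG₀meas hsub with h0 | h1
  · rw [hG₀G] at h0
    rw [h0] at hposG
    exact absurd hposG (lt_irrefl 0)
  · have hG1 : lam G = 1 := by rw [← hG₀G]; exact h1
    rw [ae_iff]
    have hc : {y | ¬ lam (limsupSet fun i => T^[i] ⁻¹' Metric.ball y (a i)) = 1} = Gᶜ := rfl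
    rw [hc, measure_compl hGmeas (measure_ne_top _ _), lam_univ, hG1, tsub_self]

end Final

/-- zero-one law for the limsup sets of an ergodic IET (preimages of balls). -/
theorem ergodic_zero_one_law_dual {d : ℕ} (L : Fin d → ℝ) (hL : L ∈ simplexSet d)
    (π : Equiv.Perm (Fin d)) (hErg : ergodicOn01 (iet L π))
    (a : ℕ → ℝ) (hpos : ∀ i, 0 < a i) (hmono : ∀ m n, m ≤ n → a n ≤ a m) :
    (∀ y ∈ Set.Ico (0 : ℝ) 1,
      0 < lam (limsupSet fun i => (iet L π)^[i] ⁻¹' Metric.ball y (a i)) →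
      lam (limsupSet fun i => (iet L π)^[i] ⁻¹' Metric.ball y (a i)) = 1) ∧
    (0 < lam {y | lam (limsupSet fun i => (iet L π)^[i] ⁻¹' Metric.ball y (a i)) = 1} →
      ∀ᵐ y ∂lam,
        lam (limsupSet fun i => (iet L π)^[i] ⁻¹' Metric.ball y (a i)) = 1) := by
  obtain ⟨hLpos, hLsum⟩ := hL
  have hmp : MeasurePreserving (iet L π) lam lam := iet_measurePreserving hLpos hLsum
  have hIco : iet L π ⁻¹' (Set.Ico 0 1) = Set.Ico 0 1 := iet_preimage_Ico hLpos hLsum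
  constructor
  · intro y _ hpos'
    rcases part_one hmp hIco hErg hmono y with h | h
    · rw [h] at hpos'
      exact absurd hpos' (lt_irrefl 0)
    · exact h
  · intro hposG
    by_cases hsmall : ∀ ε : ℝ, 0 < ε → ∃ i, a i < ε
    · exact part_two_small hLpos hLsum hErg hmono hsmall hposG
    · push_neg at hsmall
      obtain ⟨c, hc, hca⟩ := hsmall
      have hae : ∀ᵐ y ∂lam, y ∈ Set.Ico (0 : ℝ) 1 := by
        rw [lam]
        exact ae_restrict_mem measurableSet_Ico
      filter_upwards [hae] with y hy
      exact const_radius_full hmp hIco hErg hc hca hy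


end
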